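/- Let $a_1,\dots,a_k \in \mathbb{C}$ be pairwise distinct, and set $P(X) = \sum_{i=1}^k a_i \prod_{j \neq i}(X + a_j)$ and $Q(X) = \sum_{i=1}^k \prod_{j \neq i}(X + a_j)$. Then $P$ and $Q$ have no common root in $\mathbb{C}$. -/
import Mathlib


open Polynomial Finset

theorem stmt2 (k : ℕ) (hk : 1 ≤ k) (a : Fin k → ℂ) (ha : Function.Injective a)
    (P Q : ℂ[X])
    (hP : P = ∑ i : Fin k, C (a i) * ∏ j ∈ Finset.univ.erase i, (X + C (a j)))
    (hQ : Q = ∑ i : Fin k, ∏ j ∈ Finset.univ.erase i, (X + C (a j))) :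
    ∀ z : ℂ, ¬ (P.eval z = 0 ∧ Q.eval z = 0) := by
  rintro z ⟨hPz, hQz⟩
  have hPe : (∑ i : Fin k, a i * ∏ j ∈ Finset.univ.erase i, (z + a j)) = 0 := by
    simpa [hP, eval_finset_sum, eval_prod] using hPz
  have hQe : (∑ i : Fin k, ∏ j ∈ Finset.univ.erase i, (z + a j)) = 0 := by
    simpa [hQ, eval_finset_sum, eval_prod] using hQz
  have hsum : (∑ i : Fin k, (z + a i) * ∏ j ∈ Finset.univ.erase i, (z + a j)) = 0 := by
    simp only [add_mul]
    rw [Finset.sum_add_distrib, hPe, ← Finset.mul_sum, hQe]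
    ring
  have hfull : (∑ i : Fin k, (z + a i) * ∏ j ∈ Finset.univ.erase i, (z + a j))
      = (k : ℂ) * ∏ j : Fin k, (z + a j) := by
    have h1 : ∀ i ∈ (Finset.univ : Finset (Fin k)),
        (z + a i) * ∏ j ∈ Finset.univ.erase i, (z + a j) = ∏ j : Fin k, (z + a j) :=
      fun i _ => Finset.mul_prod_erase Finset.univ (fun j => z + a j) (Finset.mem_univ i)
    rw [Finset.sum_congr rfl h1]
    simp [Finset.sum_const, nsmul_eq_mul]
  have hk0 : (k : ℂ) ≠ 0 := Nat.cast_ne_zero.mpr (by omega)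
  have hprod : (∏ j : Fin k, (z + a j)) = 0 := by
    have := hfull.symm.trans hsum
    exact (mul_eq_zero.mp this).resolve_left hk0
  obtain ⟨m, -, hm⟩ := Finset.prod_eq_zero_iff.mp hprod
  have : (∑ i : Fin k, ∏ j ∈ Finset.univ.erase i, (z + a j))
      = ∏ j ∈ Finset.univ.erase m, (z + a j) := by
    apply Finset.sum_eq_single m
    · intro i _ hi
      exact Finset.prod_eq_zero (Finset.mem_erase.mpr ⟨Ne.symm hi, Finset.mem_univ m⟩) hm
    · simp
  rw [this] at hQe
  obtain ⟨j, hj, hj0⟩ := Finset.prod_eq_zero_iff.mp hQe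
  have : a j = a m := by
    have : z = -a m := by linear_combination hm
    rw [this] at hj0; linear_combination hj0
  exact (Finset.mem_erase.mp hj).1 (ha this)
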